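/- The knight's graph K(4,3) (i.e., the 4×3 board) has no Hamiltonian cycle. -/

import Mathlib

/-!
Eight of the twelve squares have only two knight moves, so a Hamiltonian cycle uses both of
them. The forced moves at (0,0), (2,1), (0,2) and (3,1) give (1,0) and (1,2) two cycle
neighbours each, which fills their two slots. Hence the cycle never leaves the six squares
(0,0), (2,1), (0,2), (1,0), (3,1), (1,2), yet it must visit all twelve.
-/

/-- 2-dimensional knight's graph on the board `[n] × [m]`. -/
def K (n m : ℕ) : SimpleGraph (Fin n × Fin m) where
  Adj u v := (Nat.dist u.1.val v.1.val = 1 ∧ Nat.dist u.2.val v.2.val = 2) ∨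
             (Nat.dist u.1.val v.1.val = 2 ∧ Nat.dist u.2.val v.2.val = 1)
  symm := by
    constructor
    rintro u v (⟨h1, h2⟩ | ⟨h1, h2⟩)
    · exact Or.inl ⟨by rw [Nat.dist_comm]; exact h1, by rw [Nat.dist_comm]; exact h2⟩
    · exact Or.inr ⟨by rw [Nat.dist_comm]; exact h1, by rw [Nat.dist_comm]; exact h2⟩
  loopless := by
    constructor
    rintro u (⟨h1, _⟩ | ⟨h1, _⟩) <;> simp [Nat.dist_self] at h1

instance (n m : ℕ) : DecidableRel (K n m).Adj := fun u v =>
  inferInstanceAs (Decidable ((Nat.dist u.1.val v.1.val = 1 ∧ Nat.dist u.2.val v.2.val = 2) ∨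
    (Nat.dist u.1.val v.1.val = 2 ∧ Nat.dist u.2.val v.2.val = 1)))

namespace SimpleGraph.Walk

variable {V : Type*} {G : SimpleGraph V} {v : V} {w : G.Walk v v}

theorem mem_of_forall_neighborSet_toSubgraph_subset [DecidableEq V] {S : Set V}
    (hS : ∀ u ∈ S, w.toSubgraph.neighborSet u ⊆ S) {s t : V} (hs : s ∈ S)
    (hsw : s ∈ w.support) (htw : t ∈ w.support) : t ∈ S := by
  by_contra ht
  have ⟨d, hd, hdS, hdS'⟩ : ∃ d ∈ w.darts, d.fst ∈ S ∧ d.snd ∉ S := by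
    by_cases hv : v ∈ S
    · obtain ⟨d, hd, h⟩ := (w.takeUntil t htw).exists_boundary_dart S hv ht
      exact ⟨d, w.darts_takeUntil_subset_darts htw hd, h⟩
    · obtain ⟨d, hd, h⟩ := (w.dropUntil s hsw).exists_boundary_dart S hs hv
      exact ⟨d, w.darts_dropUntil_subset_darts hsw hd, h⟩
  exact hdS' <| hS _ hdS <| adj_toSubgraph_iff_mem_edges.mpr <| List.mem_map_of_mem hd

theorem IsHamiltonianCycle.neighborSet_toSubgraph_eq_pair [DecidableEq V]
    (hw : w.IsHamiltonianCycle) {u a b : V} (hab : a ≠ b)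
    (ha : w.toSubgraph.Adj u a) (hb : w.toSubgraph.Adj u b) :
    w.toSubgraph.neighborSet u = {a, b} := by
  refine (Set.eq_of_subset_of_ncard_le ?_ ?_ w.finite_neighborSet_toSubgraph).symm
  · exact Set.insert_subset ha (Set.singleton_subset_iff.mpr hb)
  · rw [hw.isCycle.ncard_neighborSet_toSubgraph_eq_two (hw.mem_support u), Set.ncard_pair hab]

theorem IsHamiltonianCycle.neighborSet_toSubgraph_eq_of_forall_adj [DecidableEq V]
    (hw : w.IsHamiltonianCycle) {u a b : V} (hab : a ≠ b)
    (h : ∀ x, G.Adj u x → x = a ∨ x = b) :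
    w.toSubgraph.neighborSet u = {a, b} := by
  refine Set.eq_of_subset_of_ncard_le ((w.toSubgraph.neighborSet_subset u).trans h) ?_
    (Set.toFinite _)
  rw [hw.isCycle.ncard_neighborSet_toSubgraph_eq_two (hw.mem_support u), Set.ncard_pair hab]

end SimpleGraph.Walk

open SimpleGraph Walk in
/-- K(4,3) has no Hamiltonian cycle. -/
theorem K43_not_tourable :
    ¬ ∃ (v : Fin 4 × Fin 3) (w : (K 4 3).Walk v v), w.IsHamiltonianCycle := by
  rintro ⟨_, w, hw⟩
  have forced {u a b : Fin 4 × Fin 3} (hab : a ≠ b) (h : ∀ x, (K 4 3).Adj u x → x = a ∨ x = b) :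
      w.toSubgraph.neighborSet u = {a, b} :=
    hw.neighborSet_toSubgraph_eq_of_forall_adj hab h
  have h00 := forced (u := (0, 0)) (a := (1, 2)) (b := (2, 1)) (by decide) (by decide)
  have h21 := forced (u := (2, 1)) (a := (0, 0)) (b := (0, 2)) (by decide) (by decide)
  have h02 := forced (u := (0, 2)) (a := (1, 0)) (b := (2, 1)) (by decide) (by decide)
  have h31 := forced (u := (3, 1)) (a := (1, 0)) (b := (1, 2)) (by decide) (by decide)
  have cycle_adj {u a b x} (h : w.toSubgraph.neighborSet u = {a, b}) (hx : x = a ∨ x = b) :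
      w.toSubgraph.Adj x u :=
    (show x ∈ w.toSubgraph.neighborSet u by rw [h]; exact hx).symm
  have h10 := hw.neighborSet_toSubgraph_eq_pair (u := (1, 0)) (by decide)
    (cycle_adj h02 (.inl rfl)) (cycle_adj h31 (.inl rfl))
  have h12 := hw.neighborSet_toSubgraph_eq_pair (u := (1, 2)) (by decide)
    (cycle_adj h00 (.inl rfl)) (cycle_adj h31 (.inr rfl))
  let S : Finset (Fin 4 × Fin 3) := {(0, 0), (2, 1), (0, 2), (1, 0), (3, 1), (1, 2)}
  have closed : ∀ u ∈ (S : Set _), w.toSubgraph.neighborSet u ⊆ S := by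
    simp only [S, Finset.coe_insert, Finset.coe_singleton, Set.mem_insert_iff,
      Set.mem_singleton_iff]
    rintro u (rfl | rfl | rfl | rfl | rfl | rfl) <;>
      simp only [h00, h21, h02, h31, h10, h12, Set.insert_subset_iff, Set.singleton_subset_iff] <;>
      decide
  exact absurd (mem_of_forall_neighborSet_toSubgraph_subset closed (s := (0, 0)) (by decide)
    (hw.mem_support _) (hw.mem_support (2, 2))) (by decide)
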